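/- In the quotient Y = ℝ²/G of the plane by the group generated by a boost H_{θ₀} with θ₀ > 0, the class of the origin [0] is a closed point, while for any point x on an open semi-diagonal (e.g. x = (T,T) with T > 0) the singleton {[x]} is not closed in Y. -/

import Mathlib

/-!
Boosts form a one-parameter group fixing the origin, so the class of `0` is the singleton
`{0}` upstairs, which is closed. On the diagonal a boost acts by `(T, T) ↦ eᶿ (T, T)`, so the
orbit of `(T, T)` under the negative iterates of `H_{θ₀}` converges to the origin, which is not
in that orbit: the preimage of `{[(T, T)]}` is not closed.
-/

open Filter Topology

/-- The hyperbolic rotation (boost) with rapidity θ acting on ℝ². -/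
noncomputable def boost (θ : ℝ) (p : ℝ × ℝ) : ℝ × ℝ :=
  (p.1 * Real.cosh θ + p.2 * Real.sinh θ, p.1 * Real.sinh θ + p.2 * Real.cosh θ)

/-- Two points of ℝ² are related iff one is the image of the other under an iterate of the
boost H_{θ₀}. -/
def boostRel (θ₀ : ℝ) (p q : ℝ × ℝ) : Prop := ∃ n : ℤ, q = boost (n * θ₀) p

@[simp]
lemma boost_zero (p : ℝ × ℝ) : boost 0 p = p := by
  simp [boost]

lemma boost_boost (a b : ℝ) (p : ℝ × ℝ) : boost a (boost b p) = boost (a + b) p := by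
  simp only [boost, Real.cosh_add, Real.sinh_add, Prod.mk.injEq]
  constructor <;> ring

@[simp]
lemma boost_origin (θ : ℝ) : boost θ 0 = 0 := by
  simp [boost]

lemma boost_neg_boost (θ : ℝ) (p : ℝ × ℝ) : boost (-θ) (boost θ p) = p := by
  rw [boost_boost, neg_add_cancel, boost_zero]

lemma boost_eq_origin_iff {θ : ℝ} {p : ℝ × ℝ} : boost θ p = 0 ↔ p = 0 := by
  constructor
  · intro h
    rw [← boost_neg_boost θ p, h, boost_origin]
  · rintro rfl
    exact boost_origin θ

lemma boost_diag (θ T : ℝ) : boost θ (T, T) = (T * Real.exp θ, T * Real.exp θ) := by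
  simp only [boost, ← Real.cosh_add_sinh, Prod.mk.injEq]
  constructor <;> ring

lemma boostRel_equivalence (θ₀ : ℝ) : Equivalence (boostRel θ₀) where
  refl _ := ⟨0, by simp⟩
  symm := by
    rintro p q ⟨n, rfl⟩
    exact ⟨-n, by push_cast; rw [neg_mul, boost_neg_boost]⟩
  trans := by
    rintro p q r ⟨n, rfl⟩ ⟨m, rfl⟩
    exact ⟨m + n, by rw [boost_boost]; push_cast; ring_nf⟩

lemma preimage_mk_singleton_boostRel (θ₀ : ℝ) (p : ℝ × ℝ) :
    Quot.mk (boostRel θ₀) ⁻¹' {Quot.mk (boostRel θ₀) p} =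
      Set.range fun n : ℤ ↦ boost (n * θ₀) p := by
  ext q
  have heqv := boostRel_equivalence θ₀
  simp only [Set.mem_preimage, Set.mem_singleton_iff, Quot.eq, heqv.eqvGen_iff, Set.mem_range]
  exact ⟨fun h ↦ (heqv.symm h).imp fun _ ↦ Eq.symm, fun ⟨n, hn⟩ ↦ heqv.symm ⟨n, hn.symm⟩⟩

lemma isClosed_singleton_mk_boostRel_iff (θ₀ : ℝ) (p : ℝ × ℝ) :
    IsClosed {Quot.mk (boostRel θ₀) p} ↔ IsClosed (Set.range fun n : ℤ ↦ boost (n * θ₀) p) := by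
  rw [← isQuotientMap_quot_mk.isClosed_preimage, preimage_mk_singleton_boostRel]

lemma tendsto_boost_neg_diag {θ₀ : ℝ} (hθ₀ : 0 < θ₀) (T : ℝ) :
    Tendsto (fun n : ℕ ↦ boost ((-n : ℤ) * θ₀) (T, T)) atTop (𝓝 0) := by
  have hlin : Tendsto (fun n : ℕ ↦ -((n : ℝ) * θ₀)) atTop atBot :=
    tendsto_neg_atTop_atBot.comp ((tendsto_natCast_atTop_atTop (R := ℝ)).atTop_mul_const hθ₀)
  have hexp : Tendsto (fun n : ℕ ↦ T * Real.exp (-((n : ℝ) * θ₀))) atTop (𝓝 0) := by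
    simpa using (Real.tendsto_exp_atBot.comp hlin).const_mul T
  rw [← Prod.mk_zero_zero]
  simpa only [boost_diag, Int.cast_neg, Int.cast_natCast, neg_mul] using hexp.prodMk_nhds hexp

theorem origin_closed_diagonal_points_not_closed (θ₀ : ℝ) (hθ₀ : 0 < θ₀) :
    IsClosed {Quot.mk (boostRel θ₀) (0 : ℝ × ℝ)} ∧
    ∀ T : ℝ, 0 < T → ¬ IsClosed {Quot.mk (boostRel θ₀) ((T, T) : ℝ × ℝ)} := by
  refine ⟨?_, fun T hT ↦ ?_⟩
  · rw [isClosed_singleton_mk_boostRel_iff]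
    simp only [boost_origin, Set.range_const]
    exact isClosed_singleton
  · rw [isClosed_singleton_mk_boostRel_iff]
    intro hclosed
    obtain ⟨n, hn⟩ := hclosed.mem_of_tendsto (tendsto_boost_neg_diag hθ₀ T)
      (Eventually.of_forall fun n ↦ ⟨-n, rfl⟩)
    exact hT.ne' (congrArg Prod.fst (boost_eq_origin_iff.mp hn))
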